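/- arXiv:1106.5949 — 2 statements merged into one kernel-verified Lean document; each statement's English description precedes it below -/
import Mathlib

section
/- Let m ≥ 2 and n ≥ 2 be integers and let a_1 ≥ a_2 ≥ ⋯ ≥ a_{m−1} ≥ 0 be integers. Then the two conditions (i) n − (a_1 + ⋯ + a_{m−1}) > 0 and (ii) m·a_{m−1} − 2(a_1 + ⋯ + a_{m−1}) ≥ 0 hold simultaneously if and only if either a_1 = ⋯ = a_{m−1} = 0, or m = 2 and 1 ≤ a_1 ≤ n − 1. -/
/-! Every term of the sum is at least its last term `b = a (m - 1) ≥ 0`, so condition (ii) gives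
`2 (m - 1) b ≤ m b`. When `m ≥ 3` this forces `b = 0`, hence a nonpositive sum of nonnegative
terms, hence all `a i = 0`; so apart from the zero sequence only `m = 2` survives, where (ii) is
automatic and (i) reads `a 1 < n`. -/

open Finset

theorem Finset.eq_zero_of_two_mul_sum_le_card_add_one_mul {ι : Type*} {s : Finset ι} {f : ι → ℤ}
    {b : ℤ} (hb : 0 ≤ b) (hle : ∀ i ∈ s, b ≤ f i) (hcard : 2 ≤ #s)
    (hsum : 2 * ∑ i ∈ s, f i ≤ (#s + 1) * b) : ∀ i ∈ s, f i = 0 := by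
  have hcard_le : (#s : ℤ) * b ≤ ∑ i ∈ s, f i := by
    simpa only [nsmul_eq_mul] using card_nsmul_le_sum s f b hle
  have hcard' : (2 : ℤ) ≤ #s := by exact_mod_cast hcard
  have hb0 : b = 0 := by nlinarith
  have hnonneg : ∀ i ∈ s, 0 ≤ f i := fun i hi => hb.trans (hle i hi)
  have hsum0 : ∑ i ∈ s, f i = 0 := by
    have := sum_nonneg hnonneg
    rw [hb0] at hsum
    linarith
  exact (sum_eq_zero_iff_of_nonneg hnonneg).mp hsum0

theorem stmt_1_general (m n : ℕ) (hn : 2 ≤ n) (a : ℕ → ℤ)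
    (hanti : ∀ i j, 1 ≤ i → i ≤ j → j ≤ m - 1 → a j ≤ a i)
    (hnonneg : 0 ≤ a (m - 1)) :
    (0 < (n : ℤ) - ∑ i ∈ Finset.Icc 1 (m - 1), a i ∧
      0 ≤ (m : ℤ) * a (m - 1) - 2 * ∑ i ∈ Finset.Icc 1 (m - 1), a i) ↔
    ((∀ i, 1 ≤ i → i ≤ m - 1 → a i = 0) ∨ (m = 2 ∧ 1 ≤ a 1 ∧ a 1 ≤ (n : ℤ) - 1)) := by
  have hn' : (2 : ℤ) ≤ n := by exact_mod_cast hn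
  constructor
  · rintro ⟨hfano, hnef⟩
    by_cases hzero : ∀ i, 1 ≤ i → i ≤ m - 1 → a i = 0
    · exact Or.inl hzero
    obtain ⟨j, hj1, hjm, hj⟩ : ∃ j, 1 ≤ j ∧ j ≤ m - 1 ∧ a j ≠ 0 := by simpa using hzero
    have hm : m = 2 := by
      by_contra hm
      refine hj (eq_zero_of_two_mul_sum_le_card_add_one_mul hnonneg
        (fun i hi => hanti i (m - 1) (mem_Icc.mp hi).1 (mem_Icc.mp hi).2 le_rfl)
        (by simp only [Nat.card_Icc]; omega) ?_ j (mem_Icc.mpr ⟨hj1, hjm⟩))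
      rw [Nat.card_Icc, Nat.add_sub_cancel, Nat.cast_pred (by omega)]
      linarith
    subst hm
    obtain rfl : j = 1 := by omega
    simp only [Nat.reduceSub, Icc_self, sum_singleton] at hfano hnonneg
    exact Or.inr ⟨rfl, by omega, by linarith⟩
  · rintro (hzero | ⟨rfl, ha1, ha1n⟩)
    · have hsum0 : ∑ i ∈ Icc 1 (m - 1), a i = 0 :=
        sum_eq_zero fun i hi => hzero i (mem_Icc.mp hi).1 (mem_Icc.mp hi).2
      rw [hsum0]
      exact ⟨by linarith, by simpa using mul_nonneg (Nat.cast_nonneg m) hnonneg⟩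
    · simp only [Nat.reduceSub, Icc_self, sum_singleton, Nat.cast_ofNat]
      constructor <;> linarith

/-- Let `m ≥ 2`, `n ≥ 2` and `a 1 ≥ ⋯ ≥ a (m-1) ≥ 0` be integers. Then
`n - (a 1 + ⋯ + a (m-1)) > 0` and `m * a (m-1) - 2 * (a 1 + ⋯ + a (m-1)) ≥ 0`
hold simultaneously iff either all `a i = 0`, or `m = 2` and `1 ≤ a 1 ≤ n - 1`. -/
theorem stmt_1 (m n : ℕ) (hm : 2 ≤ m) (hn : 2 ≤ n) (a : ℕ → ℤ)
    (hanti : ∀ i j, 1 ≤ i → i ≤ j → j ≤ m - 1 → a j ≤ a i)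
    (hnonneg : 0 ≤ a (m - 1)) :
    (0 < (n : ℤ) - ∑ i ∈ Finset.Icc 1 (m - 1), a i ∧
      0 ≤ (m : ℤ) * a (m - 1) - 2 * ∑ i ∈ Finset.Icc 1 (m - 1), a i) ↔
    ((∀ i, 1 ≤ i → i ≤ m - 1 → a i = 0) ∨ (m = 2 ∧ 1 ≤ a 1 ∧ a 1 ≤ (n : ℤ) - 1)) :=
  stmt_1_general m n hn a hanti hnonneg
end

section
/- Let m ≥ 2 be an integer and let a_1 ≥ a_2 ≥ ⋯ ≥ a_{m−1} ≥ a_m = 0 be integers. In the polynomial ring ℤ[X,Y], define d_i = X + (a_1 − a_i)·Y for 1 ≤ i ≤ m. Then for every strictly increasing sequence of indices 1 ≤ i_1 < i_2 < ⋯ < i_k ≤ m and every integer l ≥ 0, there exist nonnegative integers c_0, c_1, …, c_k such that d_{i_1}·d_{i_2}⋯d_{i_k}·Y^l = ∑_{p=0}^{k} c_p·(d_1·d_2⋯d_p)·Y^{k+l−p} (where the product d_1⋯d_p is interpreted as 1 when p = 0). -/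
/-!
Write `D p = d 1 ⋯ d p` and let `C k N` be the set of `ℕ`-combinations of the `D p · Y ^ (N - p)`
with `p ≤ k`. If `d j = d (p + 1) + e · Y` with `e ≥ 0` for every `p ≤ k`, then
`D p · Y ^ (N - p) · d j = D (p + 1) · Y ^ (N - p) + e · D p · Y ^ (N + 1 - p)`,
so multiplication by `d j` maps `C k N` into `C (k + 1) (N + 1)`. Starting from `Y ^ l ∈ C 0 l`
and multiplying by `d i₁, …, d i_k` in turn gives the theorem: `i_s ≥ s` makes the shift
`a_s - a_{i_s}` of the `s`-th factor nonnegative.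
-/

open MvPolynomial Finset

section FlagCone

variable {R : Type*} [CommSemiring R] (d : ℕ → R) (Y : R)

def flagProd (p : ℕ) : R := ∏ q ∈ Icc 1 p, d q

def flagCone (k N : ℕ) : Submodule ℕ R :=
  Submodule.span ℕ ((fun p => flagProd d p * Y ^ (N - p)) '' ↑(range (k + 1)))

variable {d Y}

lemma flagProd_succ (p : ℕ) : flagProd d (p + 1) = flagProd d p * d (p + 1) :=
  prod_Icc_succ_top (Nat.le_add_left 1 p) d

lemma flagProd_mem_flagCone {k N p : ℕ} (hp : p ≤ k) :
    flagProd d p * Y ^ (N - p) ∈ flagCone d Y k N :=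
  Submodule.subset_span ⟨p, by simpa [Nat.lt_succ_iff] using hp, rfl⟩

lemma exists_eq_sum_of_mem_flagCone {k N : ℕ} {x : R} (hx : x ∈ flagCone d Y k N) :
    ∃ c : ℕ → ℕ, x = ∑ p ∈ range (k + 1), c p • (flagProd d p * Y ^ (N - p)) := by
  obtain ⟨c, hc, rfl⟩ := (Finsupp.mem_span_image_iff_linearCombination ℕ).mp hx
  refine ⟨c, ?_⟩
  rw [Finsupp.linearCombination_apply, Finsupp.sum_of_support_subset _ hc]
  simp

lemma mul_mem_flagCone_succ {k N j : ℕ} {x : R} (hx : x ∈ flagCone d Y k N) (hkN : k ≤ N)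
    (hshift : ∀ p ≤ k, ∃ e : ℕ, d j = d (p + 1) + e • Y) :
    x * d j ∈ flagCone d Y (k + 1) (N + 1) := by
  suffices flagCone d Y k N ≤
      (flagCone d Y (k + 1) (N + 1)).comap (LinearMap.mulRight ℕ (d j)) from this hx
  refine Submodule.span_le.mpr ?_
  rintro _ ⟨p, hp, rfl⟩
  have hpk : p ≤ k := Nat.lt_succ_iff.mp (mem_range.mp hp)
  obtain ⟨e, he⟩ := hshift p hpk
  have hsplit : flagProd d p * Y ^ (N - p) * d j =
      flagProd d (p + 1) * Y ^ (N + 1 - (p + 1)) + e • (flagProd d p * Y ^ (N + 1 - p)) := by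
    rw [he, flagProd_succ, Nat.add_sub_add_right, Nat.sub_add_comm (hpk.trans hkN), pow_succ]
    ring
  simp only [SetLike.mem_coe, Submodule.mem_comap, LinearMap.mulRight_apply, hsplit]
  exact add_mem (flagProd_mem_flagCone (by omega))
    (Submodule.smul_mem _ _ (flagProd_mem_flagCone (by omega)))

lemma prod_mul_pow_mem_flagCone {m : ℕ}
    (hd : ∀ i j, 1 ≤ i → i ≤ j → j ≤ m → ∃ e : ℕ, d j = d i + e • Y) (k : ℕ) (idx : Fin k → ℕ)
    (hge : ∀ s, s.val + 1 ≤ idx s) (hle : ∀ s, idx s ≤ m) (l : ℕ) :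
    (∏ s, d (idx s)) * Y ^ l ∈ flagCone d Y k (k + l) := by
  induction k with
  | zero => simpa [flagProd] using flagProd_mem_flagCone (d := d) (Y := Y) (N := l) (le_refl 0)
  | succ k ih =>
    rw [Fin.prod_univ_castSucc, mul_right_comm, Nat.add_right_comm]
    refine mul_mem_flagCone_succ (ih _ (fun s => hge s.castSucc) (fun s => hle s.castSucc))
      (Nat.le_add_right k l) fun p hp => hd _ _ (Nat.le_add_left 1 p) ?_ (hle _)
    simpa using (Nat.succ_le_succ hp).trans (hge (Fin.last k))

end FlagCone

lemma Fin.val_add_one_le_of_strictMono {k : ℕ} {f : Fin k → ℕ} (hf : StrictMono f)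
    (hpos : ∀ s, 1 ≤ f s) (s : Fin k) : s.val + 1 ≤ f s := by
  cases k with
  | zero => exact s.elim0
  | succ k =>
    induction s using Fin.induction with
    | zero => exact hpos 0
    | succ i ih =>
      simpa using Nat.succ_le_of_lt (ih.trans_lt (hf (Fin.castSucc_lt_succ (i := i))))

theorem stmt_6_general (m : ℕ) (a : ℕ → ℤ)
    (hanti : ∀ i j, 1 ≤ i → i ≤ j → j ≤ m → a j ≤ a i) :
    let Xv : MvPolynomial (Fin 2) ℤ := MvPolynomial.X 0
    let Yv : MvPolynomial (Fin 2) ℤ := MvPolynomial.X 1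
    let d : ℕ → MvPolynomial (Fin 2) ℤ := fun i => Xv + MvPolynomial.C (a 1 - a i) * Yv
    ∀ (k : ℕ) (idx : Fin k → ℕ), StrictMono idx →
      (∀ s, 1 ≤ idx s) → (∀ s, idx s ≤ m) → ∀ l : ℕ,
      ∃ c : ℕ → ℕ,
        (∏ s, d (idx s)) * Yv ^ l =
          ∑ p ∈ Finset.range (k + 1),
            MvPolynomial.C ((c p : ℤ)) * (∏ q ∈ Finset.Icc 1 p, d q) * Yv ^ (k + l - p) := by
  intro Xv Yv d k idx hmono hpos hle l
  have hshift : ∀ i j, 1 ≤ i → i ≤ j → j ≤ m → ∃ e : ℕ, d j = d i + e • Yv := by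
    intro i j hi hij hj
    refine ⟨(a i - a j).toNat, ?_⟩
    have he : (((a i - a j).toNat : ℕ) : ℤ) = a i - a j := Int.toNat_of_nonneg
      (sub_nonneg.mpr (hanti i j hi hij hj))
    simp only [d, nsmul_eq_mul, ← map_natCast (C : ℤ →+* MvPolynomial (Fin 2) ℤ), he]
    rw [show a 1 - a j = (a 1 - a i) + (a i - a j) by ring, map_add]
    ring
  obtain ⟨c, hc⟩ := exists_eq_sum_of_mem_flagCone <| prod_mul_pow_mem_flagCone hshift k idx
    (Fin.val_add_one_le_of_strictMono hmono hpos) hle l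
  refine ⟨c, hc.trans (sum_congr rfl fun p _ => ?_)⟩
  rw [nsmul_eq_mul, map_natCast, flagProd, mul_assoc]

/-- Let `m ≥ 2` and `a 1 ≥ ⋯ ≥ a (m-1) ≥ a m = 0` be integers. In `ℤ[X,Y]`
set `d i = X + (a 1 - a i)·Y`. Then for every strictly increasing sequence
`1 ≤ i₁ < ⋯ < i_k ≤ m` and every `l ≥ 0` there are nonnegative integers
`c₀,…,c_k` with `d_{i₁}⋯d_{i_k}·Y^l = ∑_{p=0}^{k} c_p·(d₁⋯d_p)·Y^{k+l-p}`
(the product `d₁⋯d_p` being `1` when `p = 0`). -/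
theorem stmt_6 (m : ℕ) (hm : 2 ≤ m) (a : ℕ → ℤ)
    (hanti : ∀ i j, 1 ≤ i → i ≤ j → j ≤ m → a j ≤ a i)
    (ham : a m = 0) :
    let Xv : MvPolynomial (Fin 2) ℤ := MvPolynomial.X 0
    let Yv : MvPolynomial (Fin 2) ℤ := MvPolynomial.X 1
    let d : ℕ → MvPolynomial (Fin 2) ℤ := fun i => Xv + MvPolynomial.C (a 1 - a i) * Yv
    ∀ (k : ℕ) (idx : Fin k → ℕ), StrictMono idx →
      (∀ s, 1 ≤ idx s) → (∀ s, idx s ≤ m) → ∀ l : ℕ,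
      ∃ c : ℕ → ℕ,
        (∏ s, d (idx s)) * Yv ^ l =
          ∑ p ∈ Finset.range (k + 1),
            MvPolynomial.C ((c p : ℤ)) * (∏ q ∈ Finset.Icc 1 p, d q) * Yv ^ (k + l - p) :=
  stmt_6_general m a hanti
end
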